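/- arXiv:2502.07765 — 2 statements merged into one kernel-verified Lean document; each statement's English description precedes it below -/
import Mathlib

section
/- In the real/complex cone setup, the complex cone 𝒞_ℂ is linearly convex: for each g ∈ B_ℂ ∖ 𝒞_ℂ there exists ℓ ∈ Ĉ'_ℂ such that ℓ(g) = 0. -/
/-! Write `ℓ(g) = ℓ(x) + i ℓ(y) ∈ ℂ` for `g = (x, y)`. If the values `ℓ(g)`, `ℓ ∈ S`, are pairwise
non-obtuse, one rotation `w` moves them all into the closed first quadrant; then both components of
`w g` lie in the closed real cone and `g ∈ 𝒞_ℂ`. Otherwise some `ℓ(g)`, `p(g)` with `ℓ, p ∈ S`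
form an obtuse angle, and still do after adding a small multiple of the strictly positive
functional `𝕞` to `ℓ` and `p`. The values at `g` of `𝒞̊'_ℝ` form a convex cone in `ℂ`, and a
positive combination of two of its vectors at an obtuse angle is orthogonal to the first one. This
gives `ℓ, p ∈ 𝒞̊'_ℝ` with `p(g) = ε i ℓ(g)`, `ε = ±1`, so that `(ℓ + ε i p)(g) = 0`. -/

open Complex Set ENNReal

namespace ConeSetup

variable {B : Type*} [NormedAddCommGroup B] [NormedSpace ℝ B]

/-- Complex scalar multiplication on the complexification `B × B`:
`(a+ib)(x,y) = (ax − by, ay + bx)`. -/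
def cSmul (z : ℂ) (p : B × B) : B × B :=
  (z.re • p.1 - z.im • p.2, z.re • p.2 + z.im • p.1)

/-- The "real" norm `‖(x,y)‖_r = √(‖x‖² + ‖y‖²)` on the complexification. -/
noncomputable def rNorm (p : B × B) : ℝ :=
  Real.sqrt (‖p.1‖ ^ 2 + ‖p.2‖ ^ 2)

/-- The complexification norm `‖(x,y)‖ = sup_{θ∈[0,2π]} ‖e^{iθ}(x,y)‖_r`. -/
noncomputable def cNorm (p : B × B) : ℝ :=
  sSup ((fun θ : ℝ => rNorm (cSmul (Complex.exp (θ * Complex.I)) p)) ''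
    Set.Icc 0 (2 * Real.pi))

/-- The real cone `𝒞_ℝ = {h ≠ 0 : ℓ(h) ≥ 0 for all ℓ ∈ S}`. -/
def realCone (S : Set (B →L[ℝ] ℝ)) : Set B :=
  {h | h ≠ 0 ∧ ∀ ℓ ∈ S, 0 ≤ ℓ h}

/-- The complex cone `𝒞_ℂ = ℂ_* ⋅ (𝒞_ℝ + i 𝒞_ℝ)`. -/
def complexCone (S : Set (B →L[ℝ] ℝ)) : Set (B × B) :=
  {p | ∃ z : ℂ, z ≠ 0 ∧ ∃ x ∈ realCone S, ∃ y ∈ realCone S, p = cSmul z (x, y)}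

/-- A map `B × B → ℂ` is a (continuous) complex-linear functional for the complex
structure `cSmul`. -/
def IsCLinearFunctional (ℓ : B × B → ℂ) : Prop :=
  (∀ p q : B × B, ℓ (p + q) = ℓ p + ℓ q) ∧
  (∀ (z : ℂ) (p : B × B), ℓ (cSmul z p) = z * ℓ p) ∧
  Continuous ℓ

/-- The dual real cone `𝒞'_ℝ = {ℓ ∈ B'_ℝ : ℓ(h) ≥ 0 for all h ∈ 𝒞_ℝ}`. -/
def dualRealCone (S : Set (B →L[ℝ] ℝ)) : Set (B →L[ℝ] ℝ) :=
  {ℓ | ∀ h ∈ realCone S, 0 ≤ ℓ h}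

/-- The dual complex cone `𝒞'_ℂ = {ℓ ∈ B'_ℂ : ℓ(h) ≠ 0 for all h ∈ 𝒞_ℂ}`. -/
def dualComplexCone (S : Set (B →L[ℝ] ℝ)) : Set (B × B → ℂ) :=
  {ℓ | IsCLinearFunctional ℓ ∧ ∀ h ∈ complexCone S, ℓ h ≠ 0}

/-- The action of a real functional on the complexification: `ℓ(x+iy) = ℓ(x) + iℓ(y)`. -/
noncomputable def cext (ℓ : B →L[ℝ] ℝ) (p : B × B) : ℂ :=
  (ℓ p.1 : ℂ) + (ℓ p.2 : ℂ) * Complex.I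

/-- `𝒞̊'_ℝ = {ℓ ∈ 𝒞'_ℝ : ℓ(x) > 0 for all x ∈ 𝒞_ℝ}`. -/
def interiorDualRealCone (S : Set (B →L[ℝ] ℝ)) : Set (B →L[ℝ] ℝ) :=
  {ℓ | ℓ ∈ dualRealCone S ∧ ∀ x ∈ realCone S, 0 < ℓ x}

/-- `Ĉ'_ℂ = {±ℓ ± ip : ℓ, p ∈ 𝒞̊'_ℝ}`. -/
def hatDualComplexCone (S : Set (B →L[ℝ] ℝ)) : Set (B × B → ℂ) :=
  {q | ∃ ℓ ∈ interiorDualRealCone S, ∃ p ∈ interiorDualRealCone S,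
    ∃ ε₁ ∈ ({1, -1} : Set ℝ), ∃ ε₂ ∈ ({1, -1} : Set ℝ),
      q = fun v => (ε₁ : ℂ) * cext ℓ v + (ε₂ : ℂ) * Complex.I * cext p v}

/-- `E_𝒞(h,g) = {ℓ(h)/ℓ(g) : ℓ ∈ 𝒞'_ℂ}`. -/
def gaugeSet (S : Set (B →L[ℝ] ℝ)) (h g : B × B) : Set ℂ :=
  {z | ∃ ℓ ∈ dualComplexCone S, z = ℓ h / ℓ g}

/-- The projective gauge
`δ_𝒞(h,g) = ln( sup_{z∈E_𝒞(h,g)} |z| / inf_{z∈E_𝒞(h,g)} |z| ) = sup_{z,w∈E_𝒞(h,g)} ln|z/w|`,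
valued in `[0,∞]`. -/
noncomputable def deltaGauge (S : Set (B →L[ℝ] ℝ)) (h g : B × B) : ℝ≥0∞ :=
  ⨆ z ∈ gaugeSet S h g, ⨆ w ∈ gaugeSet S h g, ENNReal.ofReal (Real.log (‖z‖ / ‖w‖))

/-- The real/complex cone setup: a separating family `S` of functionals, an order unit `𝕖`
whose cone norm is the norm of `B`, and a functional `𝕞` in the weak-* closed convex hull
of `ℝ₊ ⋅ S` dominating the norm on the cone. -/
structure Setup (B : Type*) [NormedAddCommGroup B] [NormedSpace ℝ B] where
  S : Set (B →L[ℝ] ℝ)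
  e : B
  mm : B →L[ℝ] ℝ
  κ : ℝ
  separating : ∀ x : B, (∀ ℓ ∈ S, ℓ x = 0) → x = 0
  e_mem : e ∈ realCone S
  arch : ∀ h : B, ∃ l : ℝ, 0 ≤ l ∧ ∀ ℓ ∈ S, 0 ≤ ℓ (l • e - h)
  norm_eq : ∀ h : B,
    ‖h‖ = sInf {l : ℝ | 0 ≤ l ∧ ∀ ℓ ∈ S, 0 ≤ ℓ (l • e - h) ∧ 0 ≤ ℓ (l • e + h)}
  κ_pos : 0 < κ
  κ_lt_one : κ < 1
  mm_e : mm e = 1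
  mm_lower : ∀ h ∈ realCone S, κ * ‖h‖ ≤ mm h
  mm_star : (⇑mm : B → ℝ) ∈ closure ((fun ℓ : B →L[ℝ] ℝ => (⇑ℓ : B → ℝ)) ''
    convexHull ℝ {q : B →L[ℝ] ℝ | ∃ c : ℝ, 0 ≤ c ∧ ∃ ℓ ∈ S, q = c • ℓ})

end ConeSetup

namespace Complex

open ComplexConjugate Topology

theorem abs_arg_sub_le_pi_div_two {z w : ℂ} (hz : 0 ≤ z.re) (hw : 0 ≤ w.re)
    (hzw : 0 ≤ (z * conj w).re) : |arg z - arg w| ≤ Real.pi / 2 := by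
  have hz' := abs_arg_le_pi_div_two_iff.2 hz
  have hw' := abs_arg_le_pi_div_two_iff.2 hw
  by_contra! hlt
  have hz0 : z ≠ 0 := by rintro rfl; rw [arg_zero, zero_sub, abs_neg] at hlt; linarith
  have hw0 : w ≠ 0 := by rintro rfl; rw [arg_zero, sub_zero] at hlt; linarith
  have hcos : Real.cos (arg z - arg w) < 0 := by
    rw [← Real.cos_abs]
    refine Real.cos_neg_of_pi_div_two_lt_of_lt hlt ?_
    linarith [abs_sub (arg z) (arg w), Real.pi_pos]
  have hre : (z * conj w).re = ‖z‖ * ‖w‖ * Real.cos (arg z - arg w) := by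
    rw [Real.cos_sub]
    simp only [mul_re, conj_re, conj_im, ← norm_mul_cos_arg z, ← norm_mul_sin_arg z,
      ← norm_mul_cos_arg w, ← norm_mul_sin_arg w]
    ring
  have : 0 < ‖z‖ * ‖w‖ := by positivity
  nlinarith

theorem re_im_exp_neg_mul_I_mul (α : ℝ) (z : ℂ) :
    (exp (-α * I) * z).re = ‖z‖ * Real.cos (arg z - α) ∧
      (exp (-α * I) * z).im = ‖z‖ * Real.sin (arg z - α) := by
  rw [Real.cos_sub, Real.sin_sub, ← ofReal_neg]
  simp only [mul_re, mul_im, exp_ofReal_mul_I_re, exp_ofReal_mul_I_im, Real.cos_neg,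
    Real.sin_neg, ← norm_mul_cos_arg z, ← norm_mul_sin_arg z]
  constructor <;> ring

/-- The arguments of pairwise non-obtuse vectors in the right half-plane lie in
`[α, α + π/2]`, where `α` is their infimum. -/
theorem exists_exp_mul_mem_quadrant_of_re_nonneg {Z : Set ℂ} (hre : ∀ z ∈ Z, 0 ≤ z.re)
    (hZ : ∀ z ∈ Z, ∀ w ∈ Z, 0 ≤ (z * conj w).re) :
    ∃ α : ℝ, ∀ z ∈ Z, 0 ≤ (exp (-α * I) * z).re ∧ 0 ≤ (exp (-α * I) * z).im := by
  rcases Z.eq_empty_or_nonempty with rfl | hne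
  · exact ⟨0, by simp⟩
  have hbdd : BddBelow (arg '' Z) := ⟨-(Real.pi / 2), by
    rintro _ ⟨z, hz, rfl⟩
    exact (abs_le.1 (abs_arg_le_pi_div_two_iff.2 (hre z hz))).1⟩
  refine ⟨sInf (arg '' Z), fun z hz => ?_⟩
  have hlow : sInf (arg '' Z) ≤ arg z := csInf_le hbdd ⟨z, hz, rfl⟩
  have hup : arg z - Real.pi / 2 ≤ sInf (arg '' Z) := by
    refine le_csInf (hne.image arg) ?_
    rintro _ ⟨w, hw, rfl⟩
    linarith [(abs_le.1 (abs_arg_sub_le_pi_div_two (hre z hz) (hre w hw) (hZ z hz w hw))).2]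
  rw [(re_im_exp_neg_mul_I_mul _ _).1, (re_im_exp_neg_mul_I_mul _ _).2]
  constructor
  · exact mul_nonneg (norm_nonneg z) (Real.cos_nonneg_of_mem_Icc ⟨by linarith, by linarith⟩)
  · exact mul_nonneg (norm_nonneg z)
      (Real.sin_nonneg_of_nonneg_of_le_pi (by linarith) (by linarith [Real.pi_pos]))

theorem exists_ne_zero_mul_mem_quadrant {Z : Set ℂ}
    (hZ : ∀ z ∈ Z, ∀ w ∈ Z, 0 ≤ (z * conj w).re) :
    ∃ w ≠ 0, ∀ z ∈ Z, 0 ≤ (w * z).re ∧ 0 ≤ (w * z).im := by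
  by_cases hzero : ∀ z ∈ Z, z = 0
  · exact ⟨1, one_ne_zero, fun z hz => by simp [hzero z hz]⟩
  push Not at hzero
  obtain ⟨z₀, hz₀, hz₀0⟩ := hzero
  have hrot : ∀ z w : ℂ, conj z₀ * z * conj (conj z₀ * w) = (normSq z₀ : ℂ) * (z * conj w) := by
    intro z w
    rw [map_mul, conj_conj, normSq_eq_conj_mul_self]
    ring
  obtain ⟨α, hα⟩ := exists_exp_mul_mem_quadrant_of_re_nonneg (Z := (conj z₀ * ·) '' Z)
    (by rintro _ ⟨z, hz, rfl⟩; simpa [mul_comm] using hZ z hz z₀ hz₀)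
    (by rintro _ ⟨z, hz, rfl⟩ _ ⟨w, hw, rfl⟩
        rw [hrot, re_ofReal_mul]
        exact mul_nonneg (normSq_nonneg _) (hZ z hz w hw))
  refine ⟨exp (-α * I) * conj z₀, mul_ne_zero (exp_ne_zero _) (by simpa using hz₀0), ?_⟩
  intro z hz
  simpa [mul_assoc] using hα _ ⟨z, hz, rfl⟩

theorem exists_pos_re_add_mul_conj_add_mul_neg {u v : ℂ} (m : ℂ) (huv : (u * conj v).re < 0) :
    ∃ δ : ℝ, 0 < δ ∧ ((u + (δ : ℂ) * m) * conj (v + (δ : ℂ) * m)).re < 0 := by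
  have hcont : Continuous fun δ : ℝ => ((u + (δ : ℂ) * m) * conj (v + (δ : ℂ) * m)).re := by
    fun_prop
  have hnear : ∀ᶠ δ : ℝ in 𝓝[>] (0 : ℝ), ((u + (δ : ℂ) * m) * conj (v + (δ : ℂ) * m)).re < 0 :=
    nhdsWithin_le_nhds (hcont.continuousAt.eventually_lt_const (by simpa using huv))
  obtain ⟨δ, hδ, hpos⟩ := (hnear.and self_mem_nhdsWithin).exists
  exact ⟨δ, hpos, hδ⟩

end Complex

open ComplexConjugate in
theorem ConvexCone.exists_mem_sign_mul_I_mul_mem (W : ConvexCone ℝ ℂ) {u v : ℂ} (hu : u ∈ W)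
    (hv : v ∈ W) (huv : (u * conj v).re < 0) :
    ∃ z ∈ W, ∃ ε ∈ ({1, -1} : Set ℝ), (ε : ℂ) * I * z ∈ W := by
  by_cases hu0 : u = 0
  · exact ⟨u, hu, 1, by simp, by simpa [hu0] using hu⟩
  -- the coefficients make `w` orthogonal to `u`, so `‖u‖² w` is a real multiple of `I * u`
  set w := (-(u * conj v).re) • u + normSq u • v
  have hw : w ∈ W :=
    W.add_mem (W.smul_mem (neg_pos.2 huv) hu) (W.smul_mem (normSq_pos.2 hu0) hv)
  have hwu : normSq u • w = (w * conj u).im • (I * u) := by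
    apply Complex.ext <;> simp [w, normSq_apply] <;> ring
  have hnw : normSq u • w ∈ W := W.smul_mem (normSq_pos.2 hu0) hw
  rcases lt_trichotomy (w * conj u).im 0 with hs | hs | hs
  · refine ⟨(-(w * conj u).im) • u, W.smul_mem (neg_pos.2 hs) hu, -1, by simp, ?_⟩
    convert hnw using 1
    rw [hwu]
    simp only [real_smul, ofReal_neg, Complex.ofReal_one]
    ring
  · refine ⟨normSq u • w, hnw, 1, by simp, ?_⟩
    simpa [hwu, hs] using hnw
  · refine ⟨(w * conj u).im • u, W.smul_mem hs hu, 1, by simp, ?_⟩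
    convert hnw using 1
    rw [hwu]
    simp only [real_smul, Complex.ofReal_one]
    ring

namespace ConeSetup

open ComplexConjugate

variable {B : Type*} [NormedAddCommGroup B] [NormedSpace ℝ B]

theorem cSmul_cSmul (z w : ℂ) (p : B × B) : cSmul z (cSmul w p) = cSmul (z * w) p := by
  simp only [cSmul, mul_re, mul_im, Prod.mk.injEq]
  constructor <;> module

@[simp]
theorem cSmul_one (p : B × B) : cSmul 1 p = p := by
  simp [cSmul]

@[simp]
theorem cSmul_zero (z : ℂ) : cSmul z (0 : B × B) = 0 := by
  simp [cSmul]

theorem cext_cSmul (ℓ : B →L[ℝ] ℝ) (z : ℂ) (p : B × B) : cext ℓ (cSmul z p) = z * cext ℓ p := by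
  apply Complex.ext <;> simp [cext, cSmul]

theorem cSmul_mem_complexCone {S : Set (B →L[ℝ] ℝ)} {z : ℂ} (hz : z ≠ 0) {p : B × B}
    (hp : p ∈ complexCone S) : cSmul z p ∈ complexCone S := by
  obtain ⟨w, hw, x, hx, y, hy, rfl⟩ := hp
  exact ⟨z * w, mul_ne_zero hz hw, x, hx, y, hy, cSmul_cSmul z w (x, y)⟩

/-- The cases where one component vanishes use `(a, 0) = ((1 - i)/2) (a + i a)` and
`(0, b) = ((1 + i)/2) (b + i b)`. -/
theorem mk_mem_complexCone {S : Set (B →L[ℝ] ℝ)} {a b : B} (ha : ∀ ℓ ∈ S, 0 ≤ ℓ a)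
    (hb : ∀ ℓ ∈ S, 0 ≤ ℓ b) (hab : (a, b) ≠ 0) : (a, b) ∈ complexCone S := by
  by_cases ha0 : a = 0
  · have hb0 : b ≠ 0 := fun hb0 => hab (by simp [ha0, hb0])
    refine ⟨(1 + I) / 2, by simp [Complex.ext_iff], b, ⟨hb0, hb⟩, b, ⟨hb0, hb⟩, ?_⟩
    simp only [cSmul, ha0, Prod.mk.injEq]
    constructor <;> norm_num [← add_smul]
  by_cases hb0 : b = 0
  · refine ⟨(1 - I) / 2, by simp [Complex.ext_iff], a, ⟨ha0, ha⟩, a, ⟨ha0, ha⟩, ?_⟩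
    simp only [cSmul, hb0, Prod.mk.injEq]
    constructor <;> norm_num [← add_smul]
  exact ⟨1, one_ne_zero, a, ⟨ha0, ha⟩, b, ⟨hb0, hb⟩, (cSmul_one _).symm⟩

theorem mem_complexCone_of_forall_re_mul_conj_nonneg {S : Set (B →L[ℝ] ℝ)} {g : B × B}
    (hg : g ≠ 0) (h : ∀ ℓ ∈ S, ∀ p ∈ S, 0 ≤ (cext ℓ g * conj (cext p g)).re) :
    g ∈ complexCone S := by
  obtain ⟨w, hw, hquad⟩ := exists_ne_zero_mul_mem_quadrant (Z := (cext · g) '' S)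
    (by rintro _ ⟨ℓ, hℓ, rfl⟩ _ ⟨p, hp, rfl⟩; exact h ℓ hℓ p hp)
  have hg_eq : g = cSmul w⁻¹ (cSmul w g) := by rw [cSmul_cSmul, inv_mul_cancel₀ hw, cSmul_one]
  have hrot : cSmul w g ∈ complexCone S := by
    refine mk_mem_complexCone (fun ℓ hℓ => ?_) (fun ℓ hℓ => ?_) (fun h0 => hg ?_)
    · simpa [← cext_cSmul, cext] using (hquad _ ⟨ℓ, hℓ, rfl⟩).1
    · simpa [← cext_cSmul, cext] using (hquad _ ⟨ℓ, hℓ, rfl⟩).2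
    · rw [hg_eq, show cSmul w g = 0 from h0, cSmul_zero]
  rw [hg_eq]
  exact cSmul_mem_complexCone (inv_ne_zero hw) hrot

theorem mem_dualRealCone_of_mem {S : Set (B →L[ℝ] ℝ)} {ℓ : B →L[ℝ] ℝ} (hℓ : ℓ ∈ S) :
    ℓ ∈ dualRealCone S :=
  fun _ hx => hx.2 ℓ hℓ

theorem mem_interiorDualRealCone_of_pos {S : Set (B →L[ℝ] ℝ)} {ℓ : B →L[ℝ] ℝ}
    (hℓ : ∀ x ∈ realCone S, 0 < ℓ x) : ℓ ∈ interiorDualRealCone S :=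
  ⟨fun x hx => (hℓ x hx).le, hℓ⟩

theorem mem_interiorDualRealCone_of_mul_norm_le {S : Set (B →L[ℝ] ℝ)} {m : B →L[ℝ] ℝ} {κ : ℝ}
    (hκ : 0 < κ) (hm : ∀ x ∈ realCone S, κ * ‖x‖ ≤ m x) : m ∈ interiorDualRealCone S :=
  mem_interiorDualRealCone_of_pos fun x hx =>
    (mul_pos hκ (norm_pos_iff.2 hx.1)).trans_le (hm x hx)

theorem add_smul_mem_interiorDualRealCone {S : Set (B →L[ℝ] ℝ)} {ℓ m : B →L[ℝ] ℝ}
    (hℓ : ℓ ∈ dualRealCone S) (hm : m ∈ interiorDualRealCone S) {δ : ℝ} (hδ : 0 < δ) :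
    ℓ + δ • m ∈ interiorDualRealCone S :=
  mem_interiorDualRealCone_of_pos fun x hx => by
    simpa using add_pos_of_nonneg_of_pos (hℓ x hx) (mul_pos hδ (hm.2 x hx))

def interiorDualCone (S : Set (B →L[ℝ] ℝ)) : ConvexCone ℝ (B →L[ℝ] ℝ) where
  carrier := interiorDualRealCone S
  smul_mem' c hc ℓ hℓ :=
    mem_interiorDualRealCone_of_pos fun x hx => by simpa using mul_pos hc (hℓ.2 x hx)
  add_mem' ℓ hℓ p hp :=
    mem_interiorDualRealCone_of_pos fun x hx => by simpa using add_pos (hℓ.2 x hx) (hp.2 x hx)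

noncomputable def cextLinearMap (g : B × B) : (B →L[ℝ] ℝ) →ₗ[ℝ] ℂ where
  toFun ℓ := cext ℓ g
  map_add' ℓ p := by simp only [cext, add_apply]; push_cast; ring
  map_smul' c ℓ := by
    simp only [cext, smul_apply, smul_eq_mul, RingHom.id_apply, real_smul]
    push_cast
    ring

@[simp]
theorem cextLinearMap_apply (g : B × B) (ℓ : B →L[ℝ] ℝ) : cextLinearMap g ℓ = cext ℓ g := rfl

theorem exists_mem_hatDualComplexCone_eq_zero {S : Set (B →L[ℝ] ℝ)} {g : B × B}
    {ℓ p : B →L[ℝ] ℝ} (hℓ : ℓ ∈ interiorDualRealCone S) (hp : p ∈ interiorDualRealCone S)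
    {ε : ℝ} (hε : ε ∈ ({1, -1} : Set ℝ)) (hpℓ : cext p g = ε * I * cext ℓ g) :
    ∃ q ∈ hatDualComplexCone S, q g = 0 := by
  refine ⟨_, ⟨ℓ, hℓ, p, hp, 1, by simp, ε, hε, rfl⟩, ?_⟩
  have hε2 : (ε : ℂ) ^ 2 = 1 := by rcases hε with rfl | rfl <;> norm_num
  push_cast
  linear_combination (ε : ℂ) * I * hpℓ + cext ℓ g * I ^ 2 * hε2 + cext ℓ g * I_sq

theorem complexCone_linearly_convex_general {B : Type*} [NormedAddCommGroup B]
    [NormedSpace ℝ B] (st : Setup B) :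
    ∀ g : B × B, g ∉ complexCone st.S →
      ∃ q ∈ hatDualComplexCone st.S, q g = 0 := by
  intro g hg
  have hm := mem_interiorDualRealCone_of_mul_norm_le st.κ_pos st.mm_lower
  set W := (interiorDualCone st.S).map (cextLinearMap g)
  suffices ∃ z ∈ W, ∃ ε ∈ ({1, -1} : Set ℝ), (ε : ℂ) * I * z ∈ W by
    obtain ⟨_, ⟨ℓ, hℓ, rfl⟩, ε, hε, p, hp, hpℓ⟩ := this
    exact exists_mem_hatDualComplexCone_eq_zero hℓ hp hε hpℓ
  by_cases hg0 : g = 0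
  · have h0 : (0 : ℂ) ∈ W := ⟨st.mm, hm, by simp [cextLinearMap, cext, hg0]⟩
    exact ⟨0, h0, 1, by simp, by simpa using h0⟩
  obtain ⟨ℓ, hℓ, p, hp, hobtuse⟩ :
      ∃ ℓ ∈ st.S, ∃ p ∈ st.S, (cext ℓ g * conj (cext p g)).re < 0 := by
    by_contra! h
    exact hg (mem_complexCone_of_forall_re_mul_conj_nonneg hg0 h)
  obtain ⟨δ, hδ, hobtuse'⟩ := exists_pos_re_add_mul_conj_add_mul_neg (cext st.mm g) hobtuse
  refine W.exists_mem_sign_mul_I_mul_mem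
    ⟨ℓ + δ • st.mm, add_smul_mem_interiorDualRealCone (mem_dualRealCone_of_mem hℓ) hm hδ, rfl⟩
    ⟨p + δ • st.mm, add_smul_mem_interiorDualRealCone (mem_dualRealCone_of_mem hp) hm hδ, rfl⟩ ?_
  simpa only [map_add, map_smul, cextLinearMap_apply, real_smul] using hobtuse'

/-- **Lemma 5.9 (linear convexity of the complex cone).** For each `g ∈ B_ℂ ∖ 𝒞_ℂ`
there exists `ℓ ∈ Ĉ'_ℂ` with `ℓ(g) = 0`. -/
theorem complexCone_linearly_convex {B : Type*} [NormedAddCommGroup B]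
    [NormedSpace ℝ B] [CompleteSpace B] (st : Setup B) :
    ∀ g : B × B, g ∉ complexCone st.S →
      ∃ q ∈ hatDualComplexCone st.S, q g = 0 :=
  complexCone_linearly_convex_general st

end ConeSetup
end

section
/- In the real/complex cone setup, for any h ∈ B_ℂ and any z ∈ ℂ with |z| < (√2 ‖h‖)^{−1}, one has 𝕖 + zh ∈ 𝒞_ℂ and δ_𝒞(𝕖, 𝕖 + zh) ≤ ln( (1 + |z|√2‖h‖) / (1 − |z|√2‖h‖) ) < ∞. -/
/-!
For `g ∈ B_ℝ` the functionals of `S` are nonnegative on `‖g‖𝕖 ± g` (the infimum defining the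
norm is taken over a closed set, so it is attained). Hence `𝕖 + g ∈ 𝒞_ℝ` when `‖g‖ < 1`, and
`(𝕖 + u) + iv = (1 - i)(½(𝕖 + u - v) + i ½(𝕖 + u + v)) ∈ 𝒞_ℂ` when `‖u‖ + ‖v‖ < 1`. Since
`‖u‖ + ‖v‖ ≤ √2 ‖(u,v)‖_r ≤ √2 |w| ‖h‖` for `(u,v) = wh`, the cone contains `𝕖 + wzh` whenever
`|w| a < 1`, where `a = |z| √2 ‖h‖`. For `ℓ ∈ 𝒞'_ℂ` the affine function `w ↦ ℓ(𝕖) + w ℓ(zh)`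
therefore has no zero in the disc `|w| < a⁻¹`, i.e. `|ℓ(zh)| ≤ a |ℓ(𝕖)|`. So every element
`ℓ(𝕖)/(ℓ(𝕖) + ℓ(zh))` of `E_𝒞(𝕖, 𝕖 + zh)` has modulus in `[(1 + a)⁻¹, (1 - a)⁻¹]`.
-/

open Complex Set ENNReal

namespace ConeSetup

variable {B : Type*} [NormedAddCommGroup B] [NormedSpace ℝ B]

lemma add_le_sqrt_two_mul_sqrt_sq_add_sq (a b : ℝ) : a + b ≤ √2 * √(a ^ 2 + b ^ 2) := by
  rw [← Real.sqrt_mul zero_le_two]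
  exact Real.le_sqrt_of_sq_le (by nlinarith [sq_nonneg (a - b)])

lemma norm_le_mul_of_forall_add_mul_ne_zero {𝕜 : Type*} [NormedField 𝕜] {c d : 𝕜} {a : ℝ}
    (ha : 0 ≤ a) (h : ∀ w : 𝕜, ‖w‖ * a < 1 → c + w * d ≠ 0) : ‖d‖ ≤ a * ‖c‖ := by
  rcases eq_or_ne d 0 with rfl | hd
  · simpa using mul_nonneg ha (norm_nonneg c)
  by_contra! hlt
  refine h (-(c / d)) ?_ (by rw [neg_mul, div_mul_cancel₀ c hd, add_neg_cancel])
  rwa [norm_neg, norm_div, div_mul_eq_mul_div, div_lt_one (norm_pos_iff.2 hd), mul_comm]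

lemma norm_div_add_mem_Icc {𝕜 : Type*} [NormedField 𝕜] {c d : 𝕜} {a : ℝ} (ha : a < 1)
    (hc : c ≠ 0) (hd : ‖d‖ ≤ a * ‖c‖) : ‖c / (c + d)‖ ∈ Icc (1 + a)⁻¹ (1 - a)⁻¹ := by
  have hc' : 0 < ‖c‖ := norm_pos_iff.2 hc
  have ha₀ : 0 ≤ a := nonneg_of_mul_nonneg_left ((norm_nonneg d).trans hd) hc'
  have hlower : (1 - a) * ‖c‖ ≤ ‖c + d‖ := by
    have := norm_sub_norm_le c (-d)
    rw [sub_neg_eq_add, norm_neg] at this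
    linarith
  have hupper : ‖c + d‖ ≤ (1 + a) * ‖c‖ := by linarith [norm_add_le c d]
  have hcd : 0 < ‖c + d‖ := lt_of_lt_of_le (by nlinarith) hlower
  rw [norm_div]
  constructor
  · rw [le_div_iff₀ hcd, inv_mul_le_iff₀ (by linarith)]
    linarith
  · rw [div_le_iff₀ hcd, le_inv_mul_iff₀ (by linarith)]
    linarith

lemma cSmul_mul (z w : ℂ) (p : B × B) : cSmul (z * w) p = cSmul z (cSmul w p) := by
  ext <;> simp only [cSmul, Complex.mul_re, Complex.mul_im] <;> module

lemma rNorm_cSmul_ofReal {r : ℝ} (hr : 0 ≤ r) (p : B × B) :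
    rNorm (cSmul (r : ℂ) p) = r * rNorm p := by
  simp only [rNorm, cSmul, ofReal_re, ofReal_im, zero_smul, sub_zero, add_zero, norm_smul,
    Real.norm_of_nonneg hr, mul_pow, ← mul_add]
  rw [Real.sqrt_mul (by positivity), Real.sqrt_sq hr]

lemma exists_mem_Icc_exp_mul_I_eq (θ : ℝ) :
    ∃ φ ∈ Icc 0 (2 * Real.pi), exp (φ * I) = exp (θ * I) := by
  refine ⟨toIcoMod Real.two_pi_pos 0 θ, ?_, ?_⟩
  · simpa using Ico_subset_Icc_self (toIcoMod_mem_Ico Real.two_pi_pos 0 θ)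
  · rw [eq_sub_of_add_eq (toIcoMod_add_toIcoDiv_zsmul _ _ θ), Complex.ofReal_sub,
      Complex.ofReal_zsmul, Complex.ofReal_mul, Complex.ofReal_ofNat,
      exp_mul_I_periodic.sub_zsmul_eq]

lemma cNorm_nonneg (p : B × B) : 0 ≤ cNorm p :=
  Real.sSup_nonneg (by rintro _ ⟨θ, -, rfl⟩; exact Real.sqrt_nonneg _)

lemma rNorm_cSmul_exp_le_cNorm (p : B × B) {θ : ℝ} (hθ : θ ∈ Icc 0 (2 * Real.pi)) :
    rNorm (cSmul (exp (θ * I)) p) ≤ cNorm p := by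
  refine le_csSup (isCompact_Icc.bddAbove_image (Continuous.continuousOn ?_)) ⟨θ, hθ, rfl⟩
  unfold rNorm cSmul
  fun_prop

lemma rNorm_cSmul_le (z : ℂ) (p : B × B) : rNorm (cSmul z p) ≤ ‖z‖ * cNorm p := by
  obtain ⟨θ, hθ, hexp⟩ := exists_mem_Icc_exp_mul_I_eq z.arg
  calc rNorm (cSmul z p) = ‖z‖ * rNorm (cSmul (exp (θ * I)) p) := by
        rw [← rNorm_cSmul_ofReal (norm_nonneg z), ← cSmul_mul, hexp, norm_mul_exp_arg_mul_I]
    _ ≤ ‖z‖ * cNorm p := by gcongr; exact rNorm_cSmul_exp_le_cNorm p hθ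

lemma norm_fst_add_norm_snd_cSmul_le (z : ℂ) (p : B × B) :
    ‖(cSmul z p).1‖ + ‖(cSmul z p).2‖ ≤ ‖z‖ * (√2 * cNorm p) :=
  calc ‖(cSmul z p).1‖ + ‖(cSmul z p).2‖ ≤ √2 * rNorm (cSmul z p) :=
        add_le_sqrt_two_mul_sqrt_sq_add_sq _ _
    _ ≤ √2 * (‖z‖ * cNorm p) := by gcongr; exact rNorm_cSmul_le z p
    _ = ‖z‖ * (√2 * cNorm p) := by ring

lemma smul_mem_realCone {S : Set (B →L[ℝ] ℝ)} {c : ℝ} (hc : 0 < c) {x : B}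
    (hx : x ∈ realCone S) : c • x ∈ realCone S :=
  ⟨smul_ne_zero hc.ne' hx.1, fun ℓ hℓ => by
    rw [map_smul, smul_eq_mul]; exact mul_nonneg hc.le (hx.2 ℓ hℓ)⟩

lemma deltaGauge_le_log_div {S : Set (B →L[ℝ] ℝ)} {h g : B × B} {m M : ℝ} (hm : 0 < m)
    (hE : ∀ ζ ∈ gaugeSet S h g, ‖ζ‖ ∈ Icc m M) :
    deltaGauge S h g ≤ ENNReal.ofReal (Real.log (M / m)) :=
  iSup₂_le fun ζ hζ => iSup₂_le fun ω hω => ENNReal.ofReal_le_ofReal <|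
    Real.log_le_log (div_pos (hm.trans_le (hE ζ hζ).1) ((hm.trans_le (hE ω hω).1)))
      (div_le_div₀ (hm.le.trans ((hE ζ hζ).1.trans (hE ζ hζ).2)) (hE ζ hζ).2 hm (hE ω hω).1)

namespace Setup

variable (st : Setup B)

lemma norm_smul_e_sub_nonneg_and_add_nonneg (g : B) :
    ∀ ℓ ∈ st.S, 0 ≤ ℓ (‖g‖ • st.e - g) ∧ 0 ≤ ℓ (‖g‖ • st.e + g) := by
  set T := {l : ℝ | 0 ≤ l ∧ ∀ ℓ ∈ st.S, 0 ≤ ℓ (l • st.e - g) ∧ 0 ≤ ℓ (l • st.e + g)}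
  -- If no `l` were admissible, the junk value `sInf ∅ = 0` would give `g = 0`, for which `l = 0` is.
  have hnorm : ‖g‖ = sInf T := st.norm_eq g
  have hT : T.Nonempty := by
    by_contra hT
    have hg : g = 0 := by
      rw [← norm_eq_zero, hnorm, not_nonempty_iff_eq_empty.1 hT, Real.sInf_empty]
    exact hT ⟨0, le_rfl, fun ℓ _ => by simp [hg]⟩
  have hclosed : IsClosed T := by
    simp only [T, ofPred_and, ofPred_forall]
    exact (isClosed_le continuous_const continuous_id).inter <| isClosed_iInter fun ℓ =>
      isClosed_iInter fun _ =>
        (isClosed_le continuous_const (by fun_prop)).inter (isClosed_le continuous_const (by fun_prop))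
  rw [hnorm]
  exact (hclosed.csInf_mem hT ⟨0, fun _ hl => hl.1⟩).2

lemma mul_apply_e_le_apply_e_add (g : B) {ℓ : B →L[ℝ] ℝ} (hℓ : ℓ ∈ st.S) :
    (1 - ‖g‖) * ℓ st.e ≤ ℓ (st.e + g) := by
  have h := (st.norm_smul_e_sub_nonneg_and_add_nonneg g ℓ hℓ).2
  have hsplit : ℓ (st.e + g) = ℓ (‖g‖ • st.e + g) + (1 - ‖g‖) * ℓ st.e := by
    simp only [map_add, map_smul, smul_eq_mul]; ring
  linarith

lemma e_add_mem_realCone {g : B} (hg : ‖g‖ < 1) : st.e + g ∈ realCone st.S := by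
  have he := st.e_mem.2
  refine ⟨fun h0 => st.e_mem.1 (st.separating _ fun ℓ hℓ => ?_), fun ℓ hℓ => ?_⟩
  · have := st.mul_apply_e_le_apply_e_add g hℓ
    rw [h0, map_zero] at this
    nlinarith [he ℓ hℓ]
  · exact (mul_nonneg (sub_nonneg.2 hg.le) (he ℓ hℓ)).trans (st.mul_apply_e_le_apply_e_add g hℓ)

lemma e_add_mem_complexCone {u v : B} (huv : ‖u‖ + ‖v‖ < 1) :
    (st.e + u, v) ∈ complexCone st.S := by
  have hsub : ‖u - v‖ < 1 := (norm_sub_le u v).trans_lt huv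
  have hadd : ‖u + v‖ < 1 := (norm_add_le u v).trans_lt huv
  refine ⟨1 - I, by simp [Complex.ext_iff],
    (1 / 2 : ℝ) • (st.e + (u - v)), smul_mem_realCone (by norm_num) (st.e_add_mem_realCone hsub),
    (1 / 2 : ℝ) • (st.e + (u + v)), smul_mem_realCone (by norm_num) (st.e_add_mem_realCone hadd),
    ?_⟩
  ext <;> simp only [cSmul, sub_re, sub_im, one_re, one_im, I_re, I_im] <;> module

lemma e_add_cSmul_mem_complexCone {z : ℂ} {h : B × B} (hz : ‖z‖ * (√2 * cNorm h) < 1) :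
    (st.e, (0 : B)) + cSmul z h ∈ complexCone st.S := by
  convert st.e_add_mem_complexCone ((norm_fst_add_norm_snd_cSmul_le z h).trans_lt hz) using 1
  exact Prod.ext rfl (zero_add _)

lemma e_mem_complexCone : (st.e, (0 : B)) ∈ complexCone st.S := by
  simpa using st.e_add_mem_complexCone (u := 0) (v := 0) (by norm_num)

lemma norm_apply_cSmul_le {ℓ : B × B → ℂ} (hℓ : ℓ ∈ dualComplexCone st.S) (z : ℂ) (h : B × B) :
    ‖ℓ (cSmul z h)‖ ≤ ‖z‖ * (√2 * cNorm h) * ‖ℓ (st.e, 0)‖ := by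
  obtain ⟨⟨hadd, hsmul, -⟩, hne⟩ := hℓ
  refine norm_le_mul_of_forall_add_mul_ne_zero (by positivity [cNorm_nonneg h]) fun w hw => ?_
  rw [← hsmul, ← cSmul_mul, ← hadd]
  exact hne _ (st.e_add_cSmul_mem_complexCone (by rwa [norm_mul, mul_assoc]))

end Setup

theorem unit_interior_general {B : Type*} [NormedAddCommGroup B] [NormedSpace ℝ B]
    (st : Setup B) :
    ∀ h : B × B, ∀ z : ℂ, ‖z‖ * (Real.sqrt 2 * cNorm h) < 1 →
      (st.e, (0 : B)) + cSmul z h ∈ complexCone st.S ∧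
      deltaGauge st.S (st.e, (0 : B)) ((st.e, (0 : B)) + cSmul z h) ≤
        ENNReal.ofReal (Real.log ((1 + ‖z‖ * Real.sqrt 2 * cNorm h) /
          (1 - ‖z‖ * Real.sqrt 2 * cNorm h))) := by
  intro h z hz
  refine ⟨st.e_add_cSmul_mem_complexCone hz, ?_⟩
  have hratio : (1 - ‖z‖ * (√2 * cNorm h))⁻¹ / (1 + ‖z‖ * (√2 * cNorm h))⁻¹ =
      (1 + ‖z‖ * √2 * cNorm h) / (1 - ‖z‖ * √2 * cNorm h) := by
    rw [inv_div_inv]; ring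
  rw [← hratio]
  refine deltaGauge_le_log_div (inv_pos.2 (by positivity [cNorm_nonneg h])) ?_
  rintro _ ⟨ℓ, hℓ, rfl⟩
  rw [hℓ.1.1]
  exact norm_div_add_mem_Icc hz (hℓ.2 _ st.e_mem_complexCone) (st.norm_apply_cSmul_le hℓ z h)

/-- **Lemma 5.14 (𝕖 is interior).** For `h ∈ B_ℂ` and `z ∈ ℂ` with `|z| < (√2 ‖h‖)⁻¹`,
one has `𝕖 + zh ∈ 𝒞_ℂ` and
`δ_𝒞(𝕖, 𝕖 + zh) ≤ ln((1 + |z|√2‖h‖)/(1 − |z|√2‖h‖)) < ∞`. -/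
theorem unit_interior {B : Type*} [NormedAddCommGroup B] [NormedSpace ℝ B]
    [CompleteSpace B] (st : Setup B) :
    ∀ h : B × B, ∀ z : ℂ, ‖z‖ * (Real.sqrt 2 * cNorm h) < 1 →
      (st.e, (0 : B)) + cSmul z h ∈ complexCone st.S ∧
      deltaGauge st.S (st.e, (0 : B)) ((st.e, (0 : B)) + cSmul z h) ≤
        ENNReal.ofReal (Real.log ((1 + ‖z‖ * Real.sqrt 2 * cNorm h) /
          (1 - ‖z‖ * Real.sqrt 2 * cNorm h))) :=
  unit_interior_general st

end ConeSetup
end
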